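/- arXiv:2309.02613 — 2 statements merged into one kernel-verified Lean document; each statement's English description precedes it below -/
import Mathlib

section
/- The Ladder mechanism is α-project fair with α(n,m) = 1/2 − 1/(2m) whenever m ≥ 2: for every preference profile P on n voters and m ≥ 2 projects and every project j, |A(P)_j − P̄_j| ≤ 1/2 − 1/(2m), where A is the Ladder mechanism. -/
open Finset

/-- With the convention used here, for a multiset of `2n+1` real numbers,
`med n s` is the `(n+1)`-st smallest element, i.e. the median. -/
noncomputable def med (n : ℕ) (s : Multiset ℝ) : ℝ :=
  (s.sort (· ≤ ·)).getD n 0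

/-- The median of the `n+1` phantom values `phantoms 0, …, phantoms n`
together with the `n` votes. -/
noncomputable def projMed (n : ℕ) (phantoms : ℕ → ℝ) (votes : Fin n → ℝ) : ℝ :=
  med n ((Multiset.range (n + 1)).map phantoms + Finset.univ.val.map votes)

/-- `P` is a preference profile: every entry lies in `[0,1]` and every row
lies in the standard simplex. -/
def IsProfile {n m : ℕ} (P : Fin n → Fin m → ℝ) : Prop :=
  (∀ i j, P i j ∈ Set.Icc (0 : ℝ) 1) ∧ ∀ i, ∑ j, P i j = 1

/-- The mean funding of project `j` in profile `P`. -/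
noncomputable def mean {n m : ℕ} (P : Fin n → Fin m → ℝ) (j : Fin m) : ℝ :=
  (∑ i, P i j) / (n : ℝ)

/-- `t` is a normalization point for the phantoms `f 0, …, f n` and profile `P`. -/
def IsNormPoint {n m : ℕ} (f : ℕ → ℝ → ℝ) (P : Fin n → Fin m → ℝ) (t : ℝ) : Prop :=
  t ∈ Set.Icc (0 : ℝ) 1 ∧
    ∑ j, projMed n (fun k => f k t) (fun i => P i j) = 1

/-- The output of the moving phantom mechanism with phantoms `f` on profile `P`,
evaluated at (normalization) point `t`, for project `j`. -/
noncomputable def output {n m : ℕ} (f : ℕ → ℝ → ℝ) (P : Fin n → Fin m → ℝ)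
    (t : ℝ) (j : Fin m) : ℝ :=
  projMed n (fun k => f k t) (fun i => P i j)

/-- `f 0, …, f n` is a phantom system for `n` voters. -/
structure IsPhantomSystem (n : ℕ) (f : ℕ → ℝ → ℝ) : Prop where
  continuousOn : ∀ k ≤ n, ContinuousOn (f k) (Set.Icc 0 1)
  monotoneOn : ∀ k ≤ n, MonotoneOn (f k) (Set.Icc 0 1)
  mem_Icc : ∀ k ≤ n, ∀ t ∈ Set.Icc (0 : ℝ) 1, f k t ∈ Set.Icc (0 : ℝ) 1
  map_zero : ∀ k ≤ n, f k 0 = 0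
  map_one : ∀ k ≤ n, f k 1 = 1
  ordered : ∀ k l, k ≤ l → l ≤ n → ∀ t ∈ Set.Icc (0 : ℝ) 1, f l t ≤ f k t

/-- The phantom system of the Ladder mechanism for `n` voters. -/
noncomputable def ladder (n : ℕ) (k : ℕ) (t : ℝ) : ℝ :=
  max (t - (k : ℝ) / (n : ℝ)) 0

/-- The phantom system of the Independent Markets mechanism for `n` voters. -/
noncomputable def indMarkets (n : ℕ) (k : ℕ) (t : ℝ) : ℝ :=
  t * ((n : ℝ) - (k : ℝ)) / (n : ℝ)

/-- The moving phantom mechanism given by the family `F` of phantom systems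
overfunds by at most `α`. -/
def OverfundsByAtMost (F : ℕ → ℕ → ℝ → ℝ) (α : ℕ → ℕ → ℝ) : Prop :=
  ∀ n m : ℕ, 0 < n → 0 < m → ∀ P : Fin n → Fin m → ℝ, IsProfile P →
    ∀ t, IsNormPoint (F n) P t → ∀ j, output (F n) P t j - mean P j ≤ α n m

/-- The moving phantom mechanism given by the family `F` of phantom systems
underfunds by at most `α`. -/
def UnderfundsByAtMost (F : ℕ → ℕ → ℝ → ℝ) (α : ℕ → ℕ → ℝ) : Prop :=
  ∀ n m : ℕ, 0 < n → 0 < m → ∀ P : Fin n → Fin m → ℝ, IsProfile P →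
    ∀ t, IsNormPoint (F n) P t → ∀ j, mean P j - output (F n) P t j ≤ α n m

/-- The moving phantom mechanism given by the family `F` of phantom systems
is proportional: on profiles of single-minded voters it outputs the mean. -/
def Proportional (F : ℕ → ℕ → ℝ → ℝ) : Prop :=
  ∀ n m : ℕ, 0 < n → 0 < m → ∀ P : Fin n → Fin m → ℝ, IsProfile P →
    (∀ i j, P i j = 0 ∨ P i j = 1) →
    ∀ t, IsNormPoint (F n) P t → ∀ j, output (F n) P t j = mean P j

/-- The moving phantom mechanism given by the family `F` of phantom systems
is zero-unanimous. -/
def ZeroUnanimous (F : ℕ → ℕ → ℝ → ℝ) : Prop :=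
  ∀ n m : ℕ, 0 < n → 0 < m → ∀ P : Fin n → Fin m → ℝ, IsProfile P →
    ∀ j : Fin m, (∀ i, P i j = 0) →
      ∀ t, IsNormPoint (F n) P t → output (F n) P t j = 0

lemma med_filter_ge (n : ℕ) (s : Multiset ℝ) (hs : Multiset.card s = 2*n+1) :
    n + 1 ≤ Multiset.card (s.filter (fun x => med n s ≤ x)) := by
  set l := s.sort (· ≤ ·) with hl
  have hlen : l.length = 2*n+1 := by rw [hl, Multiset.length_sort, hs]
  have hn : n < l.length := by omega
  have hmed : med n s = l[n] := List.getD_eq_getElem l 0 hn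
  have hsorted : l.Pairwise (· ≤ ·) := Multiset.pairwise_sort s _
  have hall : ∀ x ∈ l.drop n, med n s ≤ x := by
    intro x hx
    obtain ⟨i, hi, rfl⟩ := List.mem_iff_getElem.1 hx
    rw [List.getElem_drop]
    have hi' : n + i < l.length := by simp [List.length_drop] at hi; omega
    rcases Nat.eq_zero_or_pos i with h0 | h0
    · subst h0; simp [hmed]
    · exact le_of_eq hmed |>.trans
        (List.pairwise_iff_getElem.1 hsorted n (n+i) hn hi' (by omega))
  have hsub : (↑(l.drop n) : Multiset ℝ) ≤ s := by
    conv_rhs => rw [← Multiset.sort_eq s (· ≤ ·)]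
    exact Multiset.coe_le.2 (List.drop_sublist n l).subperm
  calc (n+1 : ℕ) = Multiset.card (↑(l.drop n) : Multiset ℝ) := by
        simp [List.length_drop, hlen]; omega
    _ = Multiset.card ((↑(l.drop n) : Multiset ℝ).filter fun x => med n s ≤ x) := by
        rw [Multiset.filter_eq_self.2 (fun a ha => hall a (Multiset.mem_coe.1 ha))]
    _ ≤ _ := Multiset.card_le_card (Multiset.filter_le_filter _ hsub)

lemma med_filter_le (n : ℕ) (s : Multiset ℝ) (hs : Multiset.card s = 2*n+1) :
    n + 1 ≤ Multiset.card (s.filter (fun x => x ≤ med n s)) := by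
  set l := s.sort (· ≤ ·) with hl
  have hlen : l.length = 2*n+1 := by rw [hl, Multiset.length_sort, hs]
  have hn : n < l.length := by omega
  have hmed : med n s = l[n] := List.getD_eq_getElem l 0 hn
  have hsorted : l.Pairwise (· ≤ ·) := Multiset.pairwise_sort s _
  have hall : ∀ x ∈ l.take (n+1), x ≤ med n s := by
    intro x hx
    obtain ⟨i, hi, rfl⟩ := List.mem_take_iff_getElem.1 hx
    have hi' : i < n + 1 := lt_of_lt_of_le hi inf_le_left
    rcases Nat.lt_or_ge i n with h0 | h0
    · exact (List.pairwise_iff_getElem.1 hsorted i n (by omega) hn h0).trans (le_of_eq hmed.symm)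
    · have : i = n := by omega
      subst this; simp [hmed]
  have hsub : (↑(l.take (n+1)) : Multiset ℝ) ≤ s := by
    conv_rhs => rw [← Multiset.sort_eq s (· ≤ ·)]
    exact Multiset.coe_le.2 (List.take_sublist (n+1) l).subperm
  calc (n+1 : ℕ) = Multiset.card (↑(l.take (n+1)) : Multiset ℝ) := by
        simp [List.length_take, hlen]; omega
    _ = Multiset.card ((↑(l.take (n+1)) : Multiset ℝ).filter fun x => x ≤ med n s) := by
        rw [Multiset.filter_eq_self.2 (fun a ha => hall a (Multiset.mem_coe.1 ha))]
    _ ≤ _ := Multiset.card_le_card (Multiset.filter_le_filter _ hsub)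

lemma projMed_count_ge (n : ℕ) (ph : ℕ → ℝ) (v : Fin n → ℝ) :
    n + 1 ≤ ((Finset.range (n+1)).filter (fun k => projMed n ph v ≤ ph k)).card
        + (Finset.univ.filter (fun i => projMed n ph v ≤ v i)).card := by
  have hcard : Multiset.card ((Multiset.range (n + 1)).map ph + Finset.univ.val.map v)
      = 2*n+1 := by simp; omega
  have h := med_filter_ge n _ hcard
  rw [Multiset.filter_add, Multiset.card_add] at h
  refine le_trans h (le_of_eq ?_)
  unfold projMed
  congr 1
  · rw [← Multiset.countP_eq_card_filter, Multiset.countP_map]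
    simp [Finset.card, Finset.filter]
  · rw [← Multiset.countP_eq_card_filter, Multiset.countP_map]
    simp [Finset.card, Finset.filter]

lemma projMed_count_le (n : ℕ) (ph : ℕ → ℝ) (v : Fin n → ℝ) :
    n + 1 ≤ ((Finset.range (n+1)).filter (fun k => ph k ≤ projMed n ph v)).card
        + (Finset.univ.filter (fun i => v i ≤ projMed n ph v)).card := by
  have hcard : Multiset.card ((Multiset.range (n + 1)).map ph + Finset.univ.val.map v)
      = 2*n+1 := by simp; omega
  have h := med_filter_le n _ hcard
  rw [Multiset.filter_add, Multiset.card_add] at h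
  refine le_trans h (le_of_eq ?_)
  unfold projMed
  congr 1
  · rw [← Multiset.countP_eq_card_filter, Multiset.countP_map]
    simp [Finset.card, Finset.filter]
  · rw [← Multiset.countP_eq_card_filter, Multiset.countP_map]
    simp [Finset.card, Finset.filter]

lemma med_mem' (n : ℕ) (s : Multiset ℝ) (hs : Multiset.card s = 2*n+1) : med n s ∈ s := by
  have hn : n < (s.sort (· ≤ ·)).length := by rw [Multiset.length_sort, hs]; omega
  have h : med n s = (s.sort (· ≤ ·))[n] := List.getD_eq_getElem _ 0 hn
  rw [h, ← Multiset.mem_sort (· ≤ ·)]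
  exact List.getElem_mem hn

lemma ladder_nonneg (n k : ℕ) (t : ℝ) : 0 ≤ ladder n k t := le_max_right _ _

lemma ladder_le (n k : ℕ) (t : ℝ) (ht : 0 ≤ t) : ladder n k t ≤ t :=
  max_le (sub_le_self _ (by positivity)) ht

lemma projMed_nonneg (n : ℕ) (hn : 0 < n) (t : ℝ) (v : Fin n → ℝ)
    (hv : ∀ i, 0 ≤ v i) : 0 ≤ projMed n (fun k => ladder n k t) v := by
  have hcard : Multiset.card ((Multiset.range (n + 1)).map (fun k => ladder n k t)
      + Finset.univ.val.map v) = 2*n+1 := by simp; omega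
  have h := med_mem' n _ hcard
  rw [Multiset.mem_add] at h
  unfold projMed
  rcases h with h | h
  · obtain ⟨k, _, hk⟩ := Multiset.mem_map.1 h
    exact hk ▸ ladder_nonneg n k t
  · obtain ⟨i, _, hi⟩ := Multiset.mem_map.1 h
    exact hi ▸ hv i

lemma projMed_le_t (n : ℕ) (hn : 0 < n) (t : ℝ) (ht : 0 ≤ t) (v : Fin n → ℝ) :
    projMed n (fun k => ladder n k t) v ≤ t := by
  have h := projMed_count_ge n (fun k => ladder n k t) v
  have hv : (Finset.univ.filter
      (fun i => projMed n (fun k => ladder n k t) v ≤ v i)).card ≤ n := by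
    simpa using Finset.card_filter_le Finset.univ (fun i => projMed n (fun k => ladder n k t) v ≤ v i)
  have hpos : 0 < ((Finset.range (n+1)).filter
      (fun k => projMed n (fun k => ladder n k t) v ≤ ladder n k t)).card := by omega
  obtain ⟨k, hk⟩ := Finset.card_pos.1 hpos
  exact le_trans (Finset.mem_filter.1 hk).2 (ladder_le n k t ht)

lemma projMed_overfund (n : ℕ) (hn : 0 < n) (t : ℝ) (ht0 : 0 ≤ t)
    (v : Fin n → ℝ) (hv0 : ∀ i, 0 ≤ v i) :
    projMed n (fun k => ladder n k t) v - (∑ i, v i)/n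
      ≤ projMed n (fun k => ladder n k t) v
        * (t - projMed n (fun k => ladder n k t) v) := by
  have hcnt := projMed_count_ge n (fun k => ladder n k t) v
  have hM0 := projMed_nonneg n hn t v hv0
  have hMt := projMed_le_t n hn t ht0 v
  set M := projMed n (fun k => ladder n k t) v with hM
  have hn' : (0:ℝ) < n := Nat.cast_pos.2 hn
  rcases eq_or_lt_of_le hM0 with h0 | h0
  · have hs : 0 ≤ ∑ i, v i := Finset.sum_nonneg fun i _ => hv0 i
    rw [← h0]
    simp
    positivity
  · set b := ((Finset.range (n+1)).filter (fun k => M ≤ ladder n k t)).card with hbdef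
    set a := (Finset.univ.filter (fun i => M ≤ v i)).card with hadef
    have hb : (b:ℝ) ≤ (n:ℝ)*(t-M) + 1 := by
      have hsub : (Finset.range (n+1)).filter (fun k => M ≤ ladder n k t)
          ⊆ Finset.range (⌊(n:ℝ)*(t-M)⌋₊ + 1) := by
        intro k hk
        rw [Finset.mem_range, Nat.lt_succ_iff]
        have hk2 := (Finset.mem_filter.1 hk).2
        have hx : M ≤ t - (k:ℝ)/n := by
          rcases le_max_iff.1 hk2 with h | h
          · exact h
          · linarith
        have hk3 : (k:ℝ) ≤ (n:ℝ)*(t-M) := by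
          have h4 : (k:ℝ)/n ≤ t - M := by linarith
          rw [div_le_iff₀ hn'] at h4
          linarith
        exact Nat.le_floor hk3
      have h5 : b ≤ ⌊(n:ℝ)*(t-M)⌋₊ + 1 := by
        simpa using Finset.card_le_card hsub
      have h6 : (⌊(n:ℝ)*(t-M)⌋₊ : ℝ) ≤ (n:ℝ)*(t-M) :=
        Nat.floor_le (by nlinarith)
      calc (b:ℝ) ≤ (⌊(n:ℝ)*(t-M)⌋₊ : ℝ) + 1 := by exact_mod_cast h5
        _ ≤ (n:ℝ)*(t-M) + 1 := by linarith
    have ha : (n:ℝ)*(1-t+M) ≤ (a:ℝ) := by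
      have h7 : n+1 ≤ b + a := hcnt
      have h8 : ((n:ℕ):ℝ) + 1 ≤ (b:ℝ) + (a:ℝ) := by exact_mod_cast h7
      nlinarith
    have hsum : (a:ℝ)*M ≤ ∑ i, v i := by
      calc (a:ℝ)*M = ∑ _i ∈ Finset.univ.filter (fun i => M ≤ v i), M := by
            rw [Finset.sum_const, nsmul_eq_mul]
        _ ≤ ∑ i ∈ Finset.univ.filter (fun i => M ≤ v i), v i :=
            Finset.sum_le_sum (fun i hi => (Finset.mem_filter.1 hi).2)
        _ ≤ ∑ i, v i := Finset.sum_le_sum_of_subset_of_nonneg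
            (Finset.filter_subset _ _) (fun i _ _ => hv0 i)
    have hkey : (1-t+M)*M ≤ (∑ i, v i)/n := by
      rw [le_div_iff₀ hn']
      nlinarith
    nlinarith

lemma projMed_underfund (n : ℕ) (hn : 0 < n) (t : ℝ) (ht0 : 0 ≤ t) (ht1 : t ≤ 1)
    (v : Fin n → ℝ) (hv0 : ∀ i, 0 ≤ v i) (hv1 : ∀ i, v i ≤ 1) :
    (∑ i, v i)/n - projMed n (fun k => ladder n k t) v
      ≤ (1 - t + projMed n (fun k => ladder n k t) v)
        * (1 - projMed n (fun k => ladder n k t) v) := by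
  have hcnt := projMed_count_le n (fun k => ladder n k t) v
  have hM0 := projMed_nonneg n hn t v hv0
  have hMt := projMed_le_t n hn t ht0 v
  set M := projMed n (fun k => ladder n k t) v with hM
  have hn' : (0:ℝ) < n := Nat.cast_pos.2 hn
  have hM1 : M ≤ 1 := le_trans hMt ht1
  set b := ((Finset.range (n+1)).filter (fun k => ladder n k t ≤ M)).card with hbdef
  set a := (Finset.univ.filter (fun i => v i ≤ M)).card with hadef
  have hc0 : (0:ℝ) ≤ (n:ℝ)*(t-M) := by nlinarith
  have hcn : ⌈(n:ℝ)*(t-M)⌉₊ ≤ n := by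
    rw [Nat.ceil_le]
    nlinarith
  have hb : (b:ℝ) ≤ (n:ℝ)*(1-t+M) + 1 := by
    have hsub : (Finset.range (n+1)).filter (fun k => ladder n k t ≤ M)
        ⊆ Finset.Icc ⌈(n:ℝ)*(t-M)⌉₊ n := by
      intro k hk
      rw [Finset.mem_Icc]
      have hk1 := Finset.mem_range.1 (Finset.mem_filter.1 hk).1
      have hk2 := (Finset.mem_filter.1 hk).2
      have hx : t - (k:ℝ)/n ≤ M := le_trans (le_max_left _ _) hk2
      have hk3 : (n:ℝ)*(t-M) ≤ (k:ℝ) := by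
        have h4 : t - M ≤ (k:ℝ)/n := by linarith
        rw [le_div_iff₀ hn'] at h4
        linarith
      exact ⟨Nat.ceil_le.2 hk3, by omega⟩
    have h5 : b ≤ n + 1 - ⌈(n:ℝ)*(t-M)⌉₊ := by
      have := Finset.card_le_card hsub
      rw [Nat.card_Icc] at this
      omega
    have h6 : (n:ℝ)*(t-M) ≤ (⌈(n:ℝ)*(t-M)⌉₊ : ℝ) := Nat.le_ceil _
    have h7 : (b:ℝ) ≤ (n:ℝ) + 1 - (⌈(n:ℝ)*(t-M)⌉₊ : ℝ) := by
      have h8 : b + ⌈(n:ℝ)*(t-M)⌉₊ ≤ n + 1 := by omega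
      have h9 : (b:ℝ) + (⌈(n:ℝ)*(t-M)⌉₊:ℝ) ≤ (n:ℝ) + 1 := by exact_mod_cast h8
      linarith
    nlinarith
  have ha : (n:ℝ)*(t-M) ≤ (a:ℝ) := by
    have h7 : n+1 ≤ b + a := hcnt
    have h8 : ((n:ℕ):ℝ) + 1 ≤ (b:ℝ) + (a:ℝ) := by exact_mod_cast h7
    nlinarith
  have han : a ≤ n := by simpa using Finset.card_filter_le Finset.univ (fun i => v i ≤ M)
  have hsum : ∑ i, v i ≤ (a:ℝ)*M + ((n:ℝ) - a) := by
    have hsplit := Finset.sum_filter_add_sum_filter_not Finset.univ (fun i => v i ≤ M) v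
    have h1 : ∑ i ∈ Finset.univ.filter (fun i => v i ≤ M), v i ≤ (a:ℝ)*M := by
      calc ∑ i ∈ Finset.univ.filter (fun i => v i ≤ M), v i
          ≤ ∑ _i ∈ Finset.univ.filter (fun i => v i ≤ M), M :=
            Finset.sum_le_sum (fun i hi => (Finset.mem_filter.1 hi).2)
        _ = (a:ℝ)*M := by rw [Finset.sum_const, nsmul_eq_mul]
    have h2 : ∑ i ∈ Finset.univ.filter (fun i => ¬ v i ≤ M), v i
        ≤ ((Finset.univ.filter (fun i => ¬ v i ≤ M)).card : ℝ) := by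
      calc ∑ i ∈ Finset.univ.filter (fun i => ¬ v i ≤ M), v i
          ≤ ∑ _i ∈ Finset.univ.filter (fun i => ¬ v i ≤ M), (1:ℝ) :=
            Finset.sum_le_sum (fun i _ => hv1 i)
        _ = _ := by rw [Finset.sum_const, nsmul_eq_mul, mul_one]
    have h3 : (Finset.univ.filter (fun i => ¬ v i ≤ M)).card = n - a := by
      have := Finset.card_filter_add_card_filter_not (s := Finset.univ)
        (p := fun i => v i ≤ M)
      simp only [Finset.card_univ, Fintype.card_fin] at this
      omega
    have h4 : ((n - a : ℕ):ℝ) = (n:ℝ) - a := by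
      have : (a:ℝ) ≤ (n:ℝ) := by exact_mod_cast han
      push_cast [Nat.cast_sub han]
      ring
    rw [← hsplit]
    rw [h3, h4] at h2
    linarith
  have hkey : (∑ i, v i)/n ≤ 1 - (t-M)*(1-M) := by
    rw [div_le_iff₀ hn']
    nlinarith
  nlinarith

/-- The Ladder mechanism is `(1/2 - 1/(2m))`-project fair for `m ≥ 2`. -/
theorem ladder_project_fair
    (n m : ℕ) (hn : 0 < n) (hm : 2 ≤ m)
    (P : Fin n → Fin m → ℝ) (hP : IsProfile P)
    (t : ℝ) (ht : IsNormPoint (ladder n) P t) (j : Fin m) :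
    |output (ladder n) P t j - mean P j| ≤ 1 / 2 - 1 / (2 * (m : ℝ)) := by
  obtain ⟨⟨ht0, ht1⟩, hnorm⟩ := ht
  obtain ⟨hP01, hProw⟩ := hP
  have hn' : (0:ℝ) < n := Nat.cast_pos.2 hn
  have hm' : (2:ℝ) ≤ (m:ℝ) := by exact_mod_cast hm
  have hmpos : (0:ℝ) < (m:ℝ) := by linarith
  set A : Fin m → ℝ := fun j' => projMed n (fun k => ladder n k t) (fun i => P i j') with hA
  have hout : output (ladder n) P t j = A j := rfl
  have hA0 : ∀ j', 0 ≤ A j' := fun j' =>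
    projMed_nonneg n hn t (fun i => P i j') (fun i => (hP01 i j').1)
  have hAt : ∀ j', A j' ≤ t := fun j' => projMed_le_t n hn t ht0 (fun i => P i j')
  have hover : ∀ j', A j' - mean P j' ≤ A j' * (t - A j') := fun j' =>
    projMed_overfund n hn t ht0 (fun i => P i j') (fun i => (hP01 i j').1)
  have hunder : ∀ j', mean P j' - A j' ≤ (1 - t + A j') * (1 - A j') := fun j' =>
    projMed_underfund n hn t ht0 ht1 (fun i => P i j')
      (fun i => (hP01 i j').1) (fun i => (hP01 i j').2)
  have hsumA : ∑ j', A j' = 1 := hnorm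
  have hsumMean : ∑ j', mean P j' = 1 := by
    unfold mean
    rw [← Finset.sum_div, Finset.sum_comm]
    simp only [hProw]
    rw [Finset.sum_const, Finset.card_univ, Fintype.card_fin, nsmul_eq_mul, mul_one]
    exact div_self hn'.ne'
  rw [hout, abs_le]
  constructor
  · -- lower bound: mean - A j ≤ 1/2 - 1/(2m)
    set e := Finset.univ.erase j with he
    have hcard : (e.card : ℝ) = (m:ℝ) - 1 := by
      rw [he, Finset.card_erase_of_mem (Finset.mem_univ j), Finset.card_univ,
        Fintype.card_fin]
      have : 1 ≤ m := by omega
      push_cast [Nat.cast_sub this]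
      ring
    have hSe : ∑ j' ∈ e, A j' = 1 - A j := by
      have h := Finset.sum_erase_add Finset.univ A (Finset.mem_univ j)
      rw [hsumA] at h
      linarith
    have hMe : ∑ j' ∈ e, mean P j' = 1 - mean P j := by
      have h := Finset.sum_erase_add Finset.univ (mean P) (Finset.mem_univ j)
      rw [hsumMean] at h
      linarith
    set Q := ∑ j' ∈ e, (A j')^2 with hQ
    have hDe : mean P j - A j = ∑ j' ∈ e, (A j' - mean P j') := by
      rw [Finset.sum_sub_distrib, hSe, hMe]
      ring
    have hst : ∑ j' ∈ e, (A j' - mean P j') ≤ ∑ j' ∈ e, A j' * (t - A j') :=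
      Finset.sum_le_sum (fun j' _ => hover j')
    have hexp : ∑ j' ∈ e, A j' * (t - A j') = t * (1 - A j) - Q := by
      calc ∑ j' ∈ e, A j' * (t - A j') = ∑ j' ∈ e, (t * A j' - (A j')^2) := by
            apply Finset.sum_congr rfl; intros; ring
        _ = t * (∑ j' ∈ e, A j') - Q := by rw [Finset.sum_sub_distrib, Finset.mul_sum]
        _ = t * (1 - A j) - Q := by rw [hSe]
    have hCS : (1 - A j)^2 ≤ ((m:ℝ) - 1) * Q := by
      have h := Finset.sum_mul_sq_le_sq_mul_sq e A (fun _ => (1:ℝ))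
      simp only [mul_one, one_pow, Finset.sum_const, nsmul_eq_mul] at h
      rw [hSe] at h
      calc (1 - A j)^2 ≤ Q * (e.card : ℝ) := h
        _ = ((m:ℝ) - 1) * Q := by rw [hcard]; ring
    have hD1 : mean P j - A j ≤ t * (1 - A j) - Q := by
      rw [hDe]; rw [← hexp]; exact hst
    have h2D : 2 * (mean P j - A j) ≤ (1 - A j) * (1 + A j) - Q := by
      nlinarith [hunder j, hD1]
    have hrhs : (1:ℝ)/2 - 1/(2*(m:ℝ)) = ((m:ℝ) - 1)/(2*(m:ℝ)) := by
      field_simp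
    rw [neg_le, neg_sub]
    rw [hrhs, le_div_iff₀ (by linarith : (0:ℝ) < 2*(m:ℝ))]
    have hm1 : (0:ℝ) < (m:ℝ) - 1 := by linarith
    have hX := mul_le_mul_of_nonneg_left h2D (by nlinarith : (0:ℝ) ≤ (m:ℝ)*((m:ℝ)-1))
    have hY := mul_le_mul_of_nonneg_left hCS (by linarith : (0:ℝ) ≤ (m:ℝ))
    nlinarith [sq_nonneg ((m:ℝ) * A j - 1), hX, hY, hm1]
  · -- upper bound
    have h1 : A j * (t - A j) ≤ 1/4 := by
      nlinarith [sq_nonneg (t - 2 * A j), hA0 j, hAt j, ht1, ht0]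
    have h2 : 1/(2*(m:ℝ)) ≤ 1/4 := by
      rw [div_le_div_iff₀ (by linarith) (by norm_num)]
      linarith
    linarith [hover j]
end

section
/- Let A be any moving phantom mechanism. Then for every n ≥ 1 and every m ≥ 2 there exist a preference profile P on n voters and m projects and a project j such that P̄_j − A(P)_j ≥ (1/2)(1 − 1/m) if n is even, and P̄_j − A(P)_j ≥ (1/2)(1 − 1/m)(1 − 1/n) if n is odd. Consequently, no moving phantom mechanism underfunds by at most α for any α with α(n,m) < (1/2)(1 − 1/m) for some even n (or α(n,m) < (1/2)(1 − 1/m)(1 − 1/n) for some odd n) and some m ≥ 2. -/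
open Finset

lemma med_le {n : ℕ} {s : Multiset ℝ} (hs : Multiset.card s = 2*n+1) {b : ℝ}
    (h : n+1 ≤ s.countP (· ≤ b)) : med n s ≤ b := by
  classical
  set l := s.sort (· ≤ ·) with hl
  have hlen : l.length = 2*n+1 := by rw [hl, Multiset.length_sort, hs]
  have hsorted : l.Pairwise (· ≤ ·) := Multiset.pairwise_sort s _
  have hcount : s.countP (· ≤ b) = l.countP (fun a => decide (a ≤ b)) := by
    rw [← Multiset.sort_eq s (· ≤ ·), ← hl, Multiset.coe_countP]
  by_contra hb
  push_neg at hb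
  have hn : n < l.length := by omega
  -- every element at index ≥ n is > b
  have key : l.countP (fun a => decide (a ≤ b)) ≤ n := by
    have := List.take_append_drop n l
    calc l.countP (fun a => decide (a ≤ b))
        = (l.take n).countP (fun a => decide (a ≤ b)) + (l.drop n).countP (fun a => decide (a ≤ b)) := by
          conv_lhs => rw [← this]
          rw [List.countP_append]
      _ ≤ (l.take n).length + 0 := by
          refine Nat.add_le_add List.countP_le_length ?_
          rw [Nat.le_zero, List.countP_eq_zero]
          intro a ha
          simp only [decide_eq_true_eq, not_le]
          obtain ⟨i, hi, rfl⟩ := List.getElem_of_mem ha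
          have hni : n + i < l.length := by
            simp only [List.length_drop] at hi; omega
          rw [List.getElem_drop]
          calc b < l[n]'hn := by
                have : l.getD n 0 = l[n]'hn := List.getD_eq_getElem l 0 hn
                rw [med, ← hl, this] at hb; exact hb
            _ ≤ l[n+i]'hni := by
                have := hsorted.rel_get_of_le (a := ⟨n, hn⟩) (b := ⟨n+i, hni⟩) (by simp [Fin.le_def])
                simpa using this
      _ ≤ n := by simp [List.length_take]
  omega

lemma le_med {n : ℕ} {s : Multiset ℝ} (hs : Multiset.card s = 2*n+1) {b : ℝ}
    (h : n+1 ≤ s.countP (fun a => b ≤ a)) : b ≤ med n s := by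
  classical
  set l := s.sort (· ≤ ·) with hl
  have hlen : l.length = 2*n+1 := by rw [hl, Multiset.length_sort, hs]
  have hsorted : l.Pairwise (· ≤ ·) := Multiset.pairwise_sort s _
  have hcount : s.countP (fun a => b ≤ a) = l.countP (fun a => decide (b ≤ a)) := by
    rw [← Multiset.sort_eq s (· ≤ ·), ← hl, Multiset.coe_countP]
  by_contra hb
  push_neg at hb
  have hn : n < l.length := by omega
  have key : l.countP (fun a => decide (b ≤ a)) ≤ n := by
    have := List.take_append_drop (n+1) l
    calc l.countP (fun a => decide (b ≤ a))
        = (l.take (n+1)).countP (fun a => decide (b ≤ a)) + (l.drop (n+1)).countP (fun a => decide (b ≤ a)) := by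
          conv_lhs => rw [← this]
          rw [List.countP_append]
      _ ≤ 0 + (l.drop (n+1)).length := by
          refine Nat.add_le_add ?_ List.countP_le_length
          rw [Nat.le_zero, List.countP_eq_zero]
          intro a ha
          simp only [decide_eq_true_eq, not_le]
          obtain ⟨i, hi, rfl⟩ := List.mem_take_iff_getElem.1 ha
          have hii : i < l.length := by omega
          calc l[i]'hii ≤ l[n]'hn := by
                have hin : i ≤ n := by simp at hi; omega
                have := hsorted.rel_get_of_le (a := ⟨i, hii⟩) (b := ⟨n, hn⟩) (by simp [Fin.le_def, hin])
                simpa using this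
            _ < b := by
                have : l.getD n 0 = l[n]'hn := List.getD_eq_getElem l 0 hn
                rw [med, ← hl, this] at hb; exact hb
      _ ≤ n := by simp [List.length_drop]; omega
  omega

lemma countP_le_med {n : ℕ} {s : Multiset ℝ} (hs : Multiset.card s = 2*n+1) :
    n+1 ≤ s.countP (fun a => a ≤ med n s) := by
  classical
  set l := s.sort (· ≤ ·) with hl
  have hlen : l.length = 2*n+1 := by rw [hl, Multiset.length_sort, hs]
  have hsorted : l.Pairwise (· ≤ ·) := Multiset.pairwise_sort s _
  have hn : n < l.length := by omega
  have hmed : med n s = l[n]'hn := by rw [med, ← hl]; exact List.getD_eq_getElem l 0 hn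
  have hcount : s.countP (fun a => a ≤ med n s) = l.countP (fun a => decide (a ≤ med n s)) := by
    rw [← Multiset.sort_eq s (· ≤ ·), ← hl, Multiset.coe_countP]
  rw [hcount]
  have : (l.take (n+1)).countP (fun a => decide (a ≤ med n s)) = (l.take (n+1)).length := by
    rw [List.countP_eq_length]
    intro a ha
    obtain ⟨i, hi, rfl⟩ := List.mem_take_iff_getElem.1 ha
    have hii : i < l.length := by omega
    simp only [decide_eq_true_eq, hmed]
    have hin : i ≤ n := by simp at hi; omega
    have := hsorted.rel_get_of_le (a := ⟨i, hii⟩) (b := ⟨n, hn⟩) (by simp [Fin.le_def, hin])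
    simpa using this
  calc n+1 = (l.take (n+1)).length := by simp [List.length_take]; omega
    _ = (l.take (n+1)).countP (fun a => decide (a ≤ med n s)) := this.symm
    _ ≤ l.countP (fun a => decide (a ≤ med n s)) := by
        conv_rhs => rw [← List.take_append_drop (n+1) l]
        rw [List.countP_append]; omega

lemma le_countP_med {n : ℕ} {s : Multiset ℝ} (hs : Multiset.card s = 2*n+1) :
    n+1 ≤ s.countP (fun a => med n s ≤ a) := by
  classical
  set l := s.sort (· ≤ ·) with hl
  have hlen : l.length = 2*n+1 := by rw [hl, Multiset.length_sort, hs]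
  have hsorted : l.Pairwise (· ≤ ·) := Multiset.pairwise_sort s _
  have hn : n < l.length := by omega
  have hmed : med n s = l[n]'hn := by rw [med, ← hl]; exact List.getD_eq_getElem l 0 hn
  have hcount : s.countP (fun a => med n s ≤ a) = l.countP (fun a => decide (med n s ≤ a)) := by
    rw [← Multiset.sort_eq s (· ≤ ·), ← hl, Multiset.coe_countP]
  rw [hcount]
  have : (l.drop n).countP (fun a => decide (med n s ≤ a)) = (l.drop n).length := by
    rw [List.countP_eq_length]
    intro a ha
    obtain ⟨i, hi, rfl⟩ := List.getElem_of_mem ha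
    have hni : n + i < l.length := by simp only [List.length_drop] at hi; omega
    rw [List.getElem_drop]
    simp only [decide_eq_true_eq, hmed]
    have := hsorted.rel_get_of_le (a := ⟨n, hn⟩) (b := ⟨n+i, hni⟩) (by simp [Fin.le_def])
    simpa using this
  calc n+1 = (l.drop n).length := by simp [List.length_drop]; omega
    _ = (l.drop n).countP (fun a => decide (med n s ≤ a)) := this.symm
    _ ≤ l.countP (fun a => decide (med n s ≤ a)) := by
        conv_rhs => rw [← List.take_append_drop n l]
        rw [List.countP_append]; omega
open Finset
lemma countP_projSet (n : ℕ) (ph : ℕ → ℝ) (votes : Fin n → ℝ) (p : ℝ → Prop) [DecidablePred p] :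
    ((Multiset.range (n+1)).map ph + Finset.univ.val.map votes).countP p
      = ((Finset.range (n+1)).filter (fun k => p (ph k))).card
        + (Finset.univ.filter (fun i => p (votes i))).card := by
  rw [Multiset.countP_add, Multiset.countP_map, Multiset.countP_map,
    ← Finset.range_val, ← Finset.filter_val, ← Finset.filter_val]
  rfl

lemma card_projSet (n : ℕ) (ph : ℕ → ℝ) (votes : Fin n → ℝ) :
    Multiset.card ((Multiset.range (n+1)).map ph + Finset.univ.val.map votes) = 2*n+1 := by
  simp; omega

lemma card_filter_ge_range (n r N : ℕ) (h : r ≤ N) :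
    ((Finset.range N).filter (fun k => r ≤ k)).card = N - r := by
  have : (Finset.range N).filter (fun k => r ≤ k) = Finset.Ico r N := by
    ext k; simp [Finset.mem_range, Finset.mem_Ico]; omega
  rw [this, Nat.card_Ico]

lemma card_filter_ge_fin (n r : ℕ) :
    (Finset.univ.filter (fun i : Fin n => r ≤ (i:ℕ))).card = n - r := by
  classical
  have h1 : ((Finset.univ : Finset (Fin n)).map Fin.valEmbedding).filter (fun k => r ≤ k)
      = (Finset.univ.filter (fun i : Fin n => r ≤ (i:ℕ))).map Fin.valEmbedding := by
    rw [Finset.filter_map]; rfl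
  have := congrArg Finset.card h1
  rw [Fin.map_valEmbedding_univ, Finset.card_map] at this
  rw [← this]
  have : (Finset.Iio n).filter (fun k => r ≤ k) = Finset.Ico r n := by
    ext k; simp [Finset.mem_Iio, Finset.mem_Ico]; omega
  rw [this, Nat.card_Ico]

lemma card_filter_lt_fin (n r : ℕ) (h : r ≤ n) :
    (Finset.univ.filter (fun i : Fin n => (i:ℕ) < r)).card = r := by
  classical
  have h1 : ((Finset.univ : Finset (Fin n)).map Fin.valEmbedding).filter (fun k => k < r)
      = (Finset.univ.filter (fun i : Fin n => (i:ℕ) < r)).map Fin.valEmbedding := by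
    rw [Finset.filter_map]; rfl
  have := congrArg Finset.card h1
  rw [Fin.map_valEmbedding_univ, Finset.card_map] at this
  rw [← this]
  have : (Finset.Iio n).filter (fun k => k < r) = Finset.Iio r := by
    ext k; simp [Finset.mem_Iio]; omega
  rw [this, Nat.card_Iio]

lemma projMed_le {n : ℕ} {ph : ℕ → ℝ} {votes : Fin n → ℝ} {b : ℝ}
    (h : n+1 ≤ ((Finset.range (n+1)).filter (fun k => ph k ≤ b)).card
        + (Finset.univ.filter (fun i => votes i ≤ b)).card) :
    projMed n ph votes ≤ b := by
  classical
  exact med_le (card_projSet n ph votes) (by rw [countP_projSet]; exact h)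

lemma le_projMed {n : ℕ} {ph : ℕ → ℝ} {votes : Fin n → ℝ} {b : ℝ}
    (h : n+1 ≤ ((Finset.range (n+1)).filter (fun k => b ≤ ph k)).card
        + (Finset.univ.filter (fun i => b ≤ votes i)).card) :
    b ≤ projMed n ph votes := by
  classical
  exact le_med (card_projSet n ph votes) (by rw [countP_projSet]; exact h)

lemma projMed_congr {n : ℕ} {ph ph' : ℕ → ℝ} (votes : Fin n → ℝ)
    (h : ∀ k ≤ n, ph k = ph' k) : projMed n ph votes = projMed n ph' votes := by
  unfold projMed
  congr 2
  exact Multiset.map_congr rfl (fun k hk => h k (by rw [Multiset.mem_range] at hk; omega))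

lemma projMed_le_add {n : ℕ} {ph ph' : ℕ → ℝ} {votes : Fin n → ℝ} {d : ℝ} (hd : 0 ≤ d)
    (h : ∀ k ≤ n, ph' k ≤ ph k + d) :
    projMed n ph' votes ≤ projMed n ph votes + d := by
  classical
  set b := projMed n ph votes
  have hb : n+1 ≤ ((Finset.range (n+1)).filter (fun k => ph k ≤ b)).card
      + (Finset.univ.filter (fun i => votes i ≤ b)).card := by
    have := countP_le_med (card_projSet n ph votes)
    rwa [countP_projSet] at this
  apply projMed_le
  refine le_trans hb (Nat.add_le_add ?_ ?_)
  · apply Finset.card_le_card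
    intro x hx
    rw [Finset.mem_filter] at hx ⊢
    obtain ⟨hx1, hx2⟩ := hx
    refine ⟨hx1, ?_⟩
    have hxn : x ≤ n := by rw [Finset.mem_range] at hx1; omega
    have := h x hxn
    linarith
  · apply Finset.card_le_card
    apply Finset.monotone_filter_right
    intro x _ hx
    linarith

lemma abs_projMed_sub {n : ℕ} {ph ph' : ℕ → ℝ} {votes : Fin n → ℝ} {d : ℝ} (hd : 0 ≤ d)
    (h : ∀ k ≤ n, |ph k - ph' k| ≤ d) :
    |projMed n ph votes - projMed n ph' votes| ≤ d := by
  rw [abs_sub_le_iff]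
  constructor
  · have := projMed_le_add (ph := ph') (ph' := ph) (votes := votes) hd
      (fun k hk => by have := abs_le.1 (h k hk); linarith)
    linarith
  · have := projMed_le_add (ph := ph) (ph' := ph') (votes := votes) hd
      (fun k hk => by have := abs_le.1 (h k hk); linarith)
    linarith

lemma projMed_continuousOn {n : ℕ} (f : ℕ → ℝ → ℝ)
    (hf : ∀ k ≤ n, ContinuousOn (f k) (Set.Icc 0 1)) (votes : Fin n → ℝ) :
    ContinuousOn (fun t => projMed n (fun k => f k t) votes) (Set.Icc 0 1) := by
  classical
  set G : (Fin (n+1) → ℝ) → ℝ :=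
    fun x => projMed n (fun k => if h : k < n+1 then x ⟨k, h⟩ else 0) votes with hG
  have hLip : LipschitzWith 1 G := by
    apply LipschitzWith.of_dist_le_mul
    intro x y
    rw [NNReal.coe_one, one_mul, Real.dist_eq]
    apply abs_projMed_sub dist_nonneg
    intro k hk
    rw [dif_pos (by omega : k < n+1), dif_pos (by omega : k < n+1)]
    have := dist_le_pi_dist x y ⟨k, by omega⟩
    rwa [Real.dist_eq] at this
  have hV : ContinuousOn (fun t => (fun k : Fin (n+1) => f k t)) (Set.Icc (0:ℝ) 1) :=
    continuousOn_pi.2 (fun k => hf k (by omega))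
  have hcomp := hLip.continuous.comp_continuousOn hV
  have : (fun t => projMed n (fun k => f k t) votes)
      = fun t => G (fun k : Fin (n+1) => f k t) := by
    funext t
    rw [hG]
    exact projMed_congr votes (fun k hk => by rw [dif_pos (by omega : k < n+1)])
  rw [this]
  exact hcomp

lemma projMed_at_zero {n : ℕ} {ph : ℕ → ℝ} (hph : ∀ k ≤ n, ph k = 0)
    {votes : Fin n → ℝ} (hv : ∀ i, 0 ≤ votes i) : projMed n ph votes = 0 := by
  classical
  apply le_antisymm
  · apply projMed_le (b := 0)
    have : (Finset.range (n+1)).filter (fun k => ph k ≤ 0) = Finset.range (n+1) := by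
      apply Finset.filter_true_of_mem
      intro k hk
      rw [hph k (by rw [Finset.mem_range] at hk; omega)]
    rw [this, Finset.card_range]
    omega
  · apply le_projMed (b := 0)
    have : (Finset.range (n+1)).filter (fun k => (0:ℝ) ≤ ph k) = Finset.range (n+1) := by
      apply Finset.filter_true_of_mem
      intro k hk
      rw [hph k (by rw [Finset.mem_range] at hk; omega)]
    rw [this, Finset.card_range]
    omega

lemma projMed_at_one {n : ℕ} {ph : ℕ → ℝ} (hph : ∀ k ≤ n, ph k = 1)
    {votes : Fin n → ℝ} (hv : ∀ i, votes i ≤ 1) : projMed n ph votes = 1 := by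
  classical
  apply le_antisymm
  · apply projMed_le (b := 1)
    have : (Finset.range (n+1)).filter (fun k => ph k ≤ 1) = Finset.range (n+1) := by
      apply Finset.filter_true_of_mem
      intro k hk
      rw [hph k (by rw [Finset.mem_range] at hk; omega)]
    rw [this, Finset.card_range]
    omega
  · apply le_projMed (b := 1)
    have : (Finset.range (n+1)).filter (fun k => (1:ℝ) ≤ ph k) = Finset.range (n+1) := by
      apply Finset.filter_true_of_mem
      intro k hk
      rw [hph k (by rw [Finset.mem_range] at hk; omega)]
    rw [this, Finset.card_range]
    omega

noncomputable def badProfile (n m : ℕ) : Fin n → Fin m → ℝ :=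
  fun i j => if (i:ℕ) < n/2 then (if (j:ℕ) = 0 then 1 else 0) else (m:ℝ)⁻¹

lemma badProfile_isProfile {n m : ℕ} (hm : 1 ≤ m) :
    (∀ i j, badProfile n m i j ∈ Set.Icc (0:ℝ) 1) ∧ ∀ i, ∑ j, badProfile n m i j = 1 := by
  have hm0 : (m:ℝ) ≠ 0 := by
    simp only [ne_eq, Nat.cast_eq_zero]; omega
  have hm1 : (1:ℝ) ≤ (m:ℝ) := by exact_mod_cast hm
  constructor
  · intro i j
    unfold badProfile
    split_ifs with h1 h2
    · exact ⟨zero_le_one, le_refl 1⟩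
    · exact ⟨le_refl 0, zero_le_one⟩
    · constructor
      · positivity
      · rw [inv_le_one_iff₀]; right; exact hm1
  · intro i
    unfold badProfile
    by_cases h : (i:ℕ) < n/2
    · simp only [if_pos h]
      have hmem : (⟨0, by omega⟩ : Fin m) ∈ Finset.univ := Finset.mem_univ _
      rw [Finset.sum_congr rfl (g := fun j => if j = (⟨0, by omega⟩ : Fin m) then (1:ℝ) else 0)
        (fun j _ => by congr 1; simp [Fin.ext_iff])]
      rw [Finset.sum_ite_eq' Finset.univ (⟨0, by omega⟩ : Fin m) (fun _ => (1:ℝ)), if_pos hmem]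
    · simp only [if_neg h]
      rw [Finset.sum_const, Finset.card_univ, Fintype.card_fin, nsmul_eq_mul]
      field_simp

lemma filter_not_lt_eq {n r : ℕ} :
    (Finset.univ.filter (fun i : Fin n => ¬ (i:ℕ) < r)) = Finset.univ.filter (fun i : Fin n => r ≤ (i:ℕ)) := by
  ext i; simp [not_lt]

lemma badProfile_mean {n m : ℕ} (hn : 1 ≤ n) (j : Fin m) (hj : (j:ℕ) = 0) :
    (∑ i, badProfile n m i j) = (n/2 : ℕ) + ((n - n/2 : ℕ) : ℝ) * (m:ℝ)⁻¹ := by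
  unfold badProfile
  simp only [hj, if_pos rfl, if_true]
  rw [← Finset.sum_filter_add_sum_filter_not Finset.univ (fun i : Fin n => (i:ℕ) < n/2)]
  rw [Finset.sum_congr rfl (g := fun i => (1:ℝ)) (fun i hi => if_pos (Finset.mem_filter.1 hi).2),
    Finset.sum_congr rfl (g := fun i => (m:ℝ)⁻¹) (fun i hi => if_neg (Finset.mem_filter.1 hi).2)]
  rw [Finset.sum_const, Finset.sum_const, nsmul_eq_mul, nsmul_eq_mul, mul_one]
  rw [card_filter_lt_fin n (n/2) (by omega), filter_not_lt_eq, card_filter_ge_fin]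

lemma output_le_inv {n m : ℕ} (hn : 1 ≤ n) (hm : 2 ≤ m) {f : ℕ → ℝ → ℝ}
    (hS : IsPhantomSystem n f) {t : ℝ} (ht : t ∈ Set.Icc (0:ℝ) 1)
    (hsum : ∑ j, projMed n (fun k => f k t) (fun i => badProfile n m i j) = 1)
    {j0 : Fin m} (hj0 : (j0:ℕ) = 0) :
    projMed n (fun k => f k t) (fun i => badProfile n m i j0) ≤ (m:ℝ)⁻¹ := by
  classical
  set r := n / 2 with hr
  have hrn : r ≤ n - r := by omega
  have hm0 : (m:ℝ) ≠ 0 := by simp only [ne_eq, Nat.cast_eq_zero]; omega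
  -- count of uniform voters satisfying any property of the value m⁻¹
  have votes_card : ∀ (j : Fin m) (p : ℝ → Prop) [DecidablePred p], p ((m:ℝ)⁻¹) →
      n - r ≤ (Finset.univ.filter (fun i : Fin n => p (badProfile n m i j))).card := by
    intro j p _ hp
    calc n - r = (Finset.univ.filter (fun i : Fin n => r ≤ (i:ℕ))).card :=
          (card_filter_ge_fin n r).symm
      _ ≤ _ := by
          apply Finset.card_le_card
          intro i hi
          rw [Finset.mem_filter] at hi ⊢
          refine ⟨hi.1, ?_⟩
          have : badProfile n m i j = (m:ℝ)⁻¹ := if_neg (by omega)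
          rw [this]; exact hp
  by_cases hc : f (n - r) t ≤ (m:ℝ)⁻¹
  · -- phantoms n-r..n are ≤ m⁻¹
    apply projMed_le
    have hph : r + 1 ≤ ((Finset.range (n+1)).filter (fun k => f k t ≤ (m:ℝ)⁻¹)).card := by
      calc r + 1 = (n+1) - (n-r) := by omega
        _ = ((Finset.range (n+1)).filter (fun k => n - r ≤ k)).card :=
            (card_filter_ge_range n (n-r) (n+1) (by omega)).symm
        _ ≤ _ := by
            apply Finset.card_le_card
            intro k hk
            rw [Finset.mem_filter] at hk ⊢
            refine ⟨hk.1, ?_⟩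
            have hkn : k ≤ n := by have := Finset.mem_range.1 hk.1; omega
            exact le_trans (hS.ordered (n-r) k hk.2 hkn t ht) hc
    have hv : n - r ≤ (Finset.univ.filter
        (fun i : Fin n => badProfile n m i j0 ≤ (m:ℝ)⁻¹)).card :=
      votes_card j0 (fun x => x ≤ (m:ℝ)⁻¹) le_rfl
    omega
  · push_neg at hc
    -- every other project gets at least m⁻¹
    have hother : ∀ j : Fin m, (j:ℕ) ≠ 0 →
        (m:ℝ)⁻¹ ≤ projMed n (fun k => f k t) (fun i => badProfile n m i j) := by
      intro j hj
      apply le_projMed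
      have hph : n - r + 1 ≤ ((Finset.range (n+1)).filter (fun k => (m:ℝ)⁻¹ ≤ f k t)).card := by
        have hsub : Finset.range (n - r + 1) ⊆
            (Finset.range (n+1)).filter (fun k => (m:ℝ)⁻¹ ≤ f k t) := by
          intro k hk
          rw [Finset.mem_range] at hk
          rw [Finset.mem_filter, Finset.mem_range]
          refine ⟨by omega, ?_⟩
          exact le_trans hc.le (hS.ordered k (n-r) (by omega) (by omega) t ht)
        calc n - r + 1 = (Finset.range (n-r+1)).card := (Finset.card_range _).symm
          _ ≤ _ := Finset.card_le_card hsub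
      have hv : n - r ≤ (Finset.univ.filter
          (fun i : Fin n => (m:ℝ)⁻¹ ≤ badProfile n m i j)).card :=
        votes_card j (fun x => (m:ℝ)⁻¹ ≤ x) le_rfl
      omega
    -- sum up
    have hj0mem : j0 ∈ Finset.univ := Finset.mem_univ _
    rw [← Finset.add_sum_erase Finset.univ _ hj0mem] at hsum
    have hcard : (Finset.univ.erase j0).card = m - 1 := by
      rw [Finset.card_erase_of_mem hj0mem, Finset.card_univ, Fintype.card_fin]
    have hbound : ((m:ℝ) - 1) * (m:ℝ)⁻¹ ≤ ∑ j ∈ Finset.univ.erase j0,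
        projMed n (fun k => f k t) (fun i => badProfile n m i j) := by
      have := Finset.card_nsmul_le_sum (Finset.univ.erase j0)
        (fun j => projMed n (fun k => f k t) (fun i => badProfile n m i j)) ((m:ℝ)⁻¹)
        (fun j hj => hother j (fun h => (Finset.mem_erase.1 hj).1 (Fin.ext (by rw [h, hj0]))))
      rw [hcard, nsmul_eq_mul] at this
      have hcast : ((m - 1 : ℕ) : ℝ) = (m:ℝ) - 1 := by
        rw [Nat.cast_sub (by omega)]; norm_num
      rwa [hcast] at this
    have : (m:ℝ) * (m:ℝ)⁻¹ = 1 := mul_inv_cancel₀ hm0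
    linarith

lemma main_bound {n m : ℕ} (hn : 1 ≤ n) (hm : 2 ≤ m) {f : ℕ → ℝ → ℝ}
    (hS : IsPhantomSystem n f) {t : ℝ} (ht : t ∈ Set.Icc (0:ℝ) 1)
    (hsum : ∑ j, projMed n (fun k => f k t) (fun i => badProfile n m i j) = 1)
    {j0 : Fin m} (hj0 : (j0:ℕ) = 0) :
    ((n/2 : ℕ) : ℝ) * (1 - 1/(m:ℝ)) / (n:ℝ) ≤
      (∑ i, badProfile n m i j0) / (n:ℝ)
        - projMed n (fun k => f k t) (fun i => badProfile n m i j0) := by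
  have hout := output_le_inv hn hm hS ht hsum hj0
  have hmean := badProfile_mean (m := m) hn j0 hj0
  have hm0 : (m:ℝ) ≠ 0 := by simp only [ne_eq, Nat.cast_eq_zero]; omega
  have hn0 : (n:ℝ) ≠ 0 := by simp only [ne_eq, Nat.cast_eq_zero]; omega
  have hnn : (0:ℝ) < (n:ℝ) := by positivity
  have hcast : ((n - n/2 : ℕ) : ℝ) = (n:ℝ) - ((n/2 : ℕ) : ℝ) := by
    rw [Nat.cast_sub (by omega)]
  have key : (∑ i, badProfile n m i j0) / (n:ℝ) - (m:ℝ)⁻¹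
      = ((n/2 : ℕ) : ℝ) * (1 - 1/(m:ℝ)) / (n:ℝ) := by
    rw [hmean, hcast]
    field_simp
    ring
  linarith

lemma contOn_sum {ι : Type*} (s : Finset ι) (f : ι → ℝ → ℝ) (t : Set ℝ)
    (h : ∀ i ∈ s, ContinuousOn (f i) t) :
    ContinuousOn (fun x => ∑ i ∈ s, f i x) t := by
  classical
  induction s using Finset.induction with
  | empty => simpa using continuousOn_const
  | @insert a s' hx ih =>
      simp only [Finset.sum_insert hx]
      exact (h a (Finset.mem_insert_self a s')).add
        (ih (fun i hi => h i (Finset.mem_insert_of_mem hi)))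

lemma exists_normPoint {n m : ℕ} (hn : 1 ≤ n) (hm : 1 ≤ m) {f : ℕ → ℝ → ℝ}
    (hS : IsPhantomSystem n f) {P : Fin n → Fin m → ℝ}
    (hP : ∀ i j, P i j ∈ Set.Icc (0:ℝ) 1) :
    ∃ t ∈ Set.Icc (0:ℝ) 1, ∑ j, projMed n (fun k => f k t) (fun i => P i j) = 1 := by
  set g : ℝ → ℝ := fun t => ∑ j, projMed n (fun k => f k t) (fun i => P i j) with hg
  have hcont : ContinuousOn g (Set.Icc 0 1) := by
    apply contOn_sum
    intro j _
    exact projMed_continuousOn f hS.continuousOn _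
  have hg0 : g 0 = 0 := by
    rw [hg]
    simp only
    rw [Finset.sum_eq_zero]
    intro j _
    exact projMed_at_zero hS.map_zero (fun i => (hP i j).1)
  have hg1 : g 1 = m := by
    rw [hg]
    simp only
    rw [Finset.sum_congr rfl (g := fun _ => (1:ℝ))
      (fun j _ => projMed_at_one hS.map_one (fun i => (hP i j).2))]
    rw [Finset.sum_const, Finset.card_univ, Fintype.card_fin, nsmul_eq_mul, mul_one]
  have h1mem : (1:ℝ) ∈ Set.Icc (g 0) (g 1) := by
    rw [hg0, hg1]
    exact ⟨zero_le_one, by exact_mod_cast hm⟩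
  obtain ⟨t, ht, hgt⟩ := intermediate_value_Icc zero_le_one hcont h1mem
  exact ⟨t, ht, hgt⟩

/-- Lower bound on underfunding for all moving phantom mechanisms,
and the resulting impossibility. -/
theorem moving_phantom_underfund_lower_bound
    (F : ℕ → ℕ → ℝ → ℝ) (hF : ∀ n, 0 < n → IsPhantomSystem n (F n)) :
    (∀ n m : ℕ, 1 ≤ n → 2 ≤ m →
      ∃ P : Fin n → Fin m → ℝ, IsProfile P ∧ ∃ j : Fin m,
        ∀ t, IsNormPoint (F n) P t →
          (Even n → (1 / 2) * (1 - 1 / (m : ℝ)) ≤ mean P j - output (F n) P t j) ∧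
          (Odd n → (1 / 2) * (1 - 1 / (m : ℝ)) * (1 - 1 / (n : ℝ)) ≤
            mean P j - output (F n) P t j)) ∧
    ¬ ∃ α : ℕ → ℕ → ℝ, UnderfundsByAtMost F α ∧
        ∃ n m : ℕ, 1 ≤ n ∧ 2 ≤ m ∧
          ((Even n ∧ α n m < (1 / 2) * (1 - 1 / (m : ℝ))) ∨
           (Odd n ∧ α n m < (1 / 2) * (1 - 1 / (m : ℝ)) * (1 - 1 / (n : ℝ)))) := by
  have part1 : ∀ n m : ℕ, 1 ≤ n → 2 ≤ m →
      ∃ P : Fin n → Fin m → ℝ, IsProfile P ∧ ∃ j : Fin m,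
        ∀ t, IsNormPoint (F n) P t →
          (Even n → (1 / 2) * (1 - 1 / (m : ℝ)) ≤ mean P j - output (F n) P t j) ∧
          (Odd n → (1 / 2) * (1 - 1 / (m : ℝ)) * (1 - 1 / (n : ℝ)) ≤
            mean P j - output (F n) P t j) := by
    intro n m hn hm
    refine ⟨badProfile n m, badProfile_isProfile (by omega), ⟨0, by omega⟩, ?_⟩
    intro t hNorm
    obtain ⟨htI, hsum⟩ := hNorm
    have hb := main_bound hn hm (hF n (by omega)) htI hsum
      (j0 := (⟨0, by omega⟩ : Fin m)) rfl
    have hb' : ((n/2 : ℕ) : ℝ) * (1 - 1/(m:ℝ)) / (n:ℝ) ≤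
        mean (badProfile n m) ⟨0, by omega⟩
          - output (F n) (badProfile n m) t ⟨0, by omega⟩ := hb
    have hm1 : (1:ℝ) ≤ (m:ℝ) := by exact_mod_cast (by omega : 1 ≤ m)
    constructor
    · intro hev
      have h2 : n = 2 * (n/2) := by obtain ⟨k, hk⟩ := hev; omega
      have hr1 : 1 ≤ n/2 := by omega
      have hR0 : (0:ℝ) < ((n/2 : ℕ) : ℝ) := by exact_mod_cast hr1
      have hncast : (n:ℝ) = 2 * ((n/2 : ℕ) : ℝ) := by exact_mod_cast congrArg Nat.cast h2
      have heq : ((n/2 : ℕ) : ℝ) * (1 - 1/(m:ℝ)) / (n:ℝ) = (1/2) * (1 - 1/(m:ℝ)) := by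
        rw [hncast]
        field_simp
      linarith
    · intro hodd
      have h2 : n = 2 * (n/2) + 1 := by obtain ⟨k, hk⟩ := hodd; omega
      have hncast : (n:ℝ) = 2 * ((n/2 : ℕ) : ℝ) + 1 := by exact_mod_cast congrArg Nat.cast h2
      have hR0 : (0:ℝ) ≤ ((n/2 : ℕ) : ℝ) := by positivity
      have heq : ((n/2 : ℕ) : ℝ) * (1 - 1/(m:ℝ)) / (n:ℝ)
          = (1/2) * (1 - 1/(m:ℝ)) * (1 - 1/(n:ℝ)) := by
        rw [hncast]
        have hden : (2 * ((n/2 : ℕ) : ℝ) + 1) ≠ 0 := by positivity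
        field_simp
        ring
      linarith
  refine ⟨part1, ?_⟩
  rintro ⟨α, hU, n, m, hn, hm, hcase⟩
  obtain ⟨P, hP, j, hPj⟩ := part1 n m hn hm
  obtain ⟨t, ht, hsum⟩ := exists_normPoint hn (by omega) (hF n (by omega)) hP.1
  have hNorm : IsNormPoint (F n) P t := ⟨ht, hsum⟩
  have hle := hU n m (by omega) (by omega) P hP t hNorm j
  obtain ⟨heven, hlt⟩ | ⟨hodd, hlt⟩ := hcase
  · have := (hPj t hNorm).1 heven
    linarith
  · have := (hPj t hNorm).2 hodd
    linarith
end
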